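/- Let d ≥ 2. There exist constants C, c > 0 depending only on d such that for all L, W > 0, every x ∈ V, and every index 2 ≤ i ≤ d: if x_i ≥ 0 then G(x)_i ≥ c·x_i·(1 - (C·W/(W+L))^{d-1}), and if x_i ≤ 0 then G(x)_i ≤ c·x_i·(1 - (C·W/(W+L))^{d-1}). -/

import Mathlib

open MeasureTheory

/-- The box `V = {z ∈ ℝ^d : |z_1| ≤ L, |z_i| ≤ W for 2 ≤ i ≤ d}`. -/
def gravBox (d : ℕ) (h0 : 0 < d) (L W : ℝ) : Set (EuclideanSpace ℝ (Fin d)) :=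
  {z | |z ⟨0, h0⟩| ≤ L ∧ ∀ i : Fin d, i ≠ ⟨0, h0⟩ → |z i| ≤ W}

/-- `G(x) = -∫_V (z-x)/|z-x|^d dz`, the conditional expectation of the gravitational force at
`x` given that the box `V` contains no stars. -/
noncomputable def gravBoxForce (d : ℕ) (h0 : 0 < d) (L W : ℝ)
    (x : EuclideanSpace ℝ (Fin d)) : EuclideanSpace ℝ (Fin d) :=
  -∫ z in gravBox d h0 L W, (‖z - x‖ ^ d)⁻¹ • (z - x)

/-!
Fix `x` in the box and a transverse index `i`, and let `σ` be the reflection in the hyperplane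
`z_i = x_i`. It preserves `|z - x|` and reverses the sign of `(z - x)_i`, so the integral of the
`i`-th coordinate of the integrand over the part of the box that `σ` maps into the box vanishes,
and only the points whose mirror image leaves the box contribute to `G(x)_i`. For those points
`z_i ≤ x_i`, so `G(x)_i ≥ 0` when `x_i ≥ 0`. If moreover `W ≤ L`, they contain a box of volume
`x_i W^{d-1}` (coordinate `i` in `(-W, x_i - W)`, every other coordinate in a window of width `W`
around `x_j`) on which the integrand is at least `W / (2dW)^d`, whence `G(x)_i ≥ x_i / (2d)^d`.
With `C = 2` the factor `1 - (2W/(W+L))^{d-1}` lies in `[0, 1]` when `W ≤ L` and is negative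
otherwise, so both cases give the claim. The case `x_i ≤ 0` follows from the symmetry
`x_i ↦ -x_i` of the box.
-/

open Set Module

lemma exists_Icc_subset_Icc_mem {a b h : ℝ} (ha : |a| ≤ b) (hh : 0 ≤ h) (hhb : h ≤ b) :
    ∃ s, a ∈ Icc s (s + h) ∧ Icc s (s + h) ⊆ Icc (-b) b := by
  obtain ⟨ha₁, ha₂⟩ := abs_le.1 ha
  refine ⟨max (a - h) (-b), ⟨max_le (by linarith) (by linarith), ?_⟩, Icc_subset_Icc ?_ ?_⟩
  · grind
  · exact le_max_right _ _
  · grind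

lemma mul_one_sub_le_of_le {a q g : ℝ} (hg : 0 ≤ g) (ha : 0 ≤ a) (hq : 0 ≤ q)
    (h : q ≤ 1 → a ≤ g) : a * (1 - q) ≤ g := by
  by_cases hq1 : q ≤ 1
  · nlinarith [h hq1]
  · nlinarith

lemma Fintype.prod_ite_eq_mul_pow {ι M : Type*} [Fintype ι] [DecidableEq ι] [CommMonoid M]
    (i : ι) (a c : M) :
    ∏ j, (if j = i then a else c) = a * c ^ (Fintype.card ι - 1) := by
  rw [Fintype.prod_eq_mul_prod_compl i, if_pos rfl,
    Finset.prod_congr rfl fun j hj => if_neg (by simpa using hj), Finset.prod_const,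
    Finset.card_compl, Finset.card_singleton]

section Antisymmetric

variable {α E : Type*} [MeasurableSpace α] {μ : Measure α} [NormedAddCommGroup E]
  [NormedSpace ℝ E]

lemma setIntegral_eq_setIntegral_sdiff_preimage_of_comp_eq_neg (σ : α ≃ᵐ α)
    (hσ : MeasurePreserving σ μ μ) (hinv : Function.Involutive σ) {f : α → E}
    (hf : ∀ z, f (σ z) = -f z) {s : Set α} (hs : MeasurableSet s) (hfs : IntegrableOn f s μ) :
    ∫ z in s, f z ∂μ = ∫ z in s \ σ ⁻¹' s, f z ∂μ := by
  have hsymm : σ ⁻¹' (s ∩ σ ⁻¹' s) = s ∩ σ ⁻¹' s := by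
    ext z; simp [hinv z, and_comm]
  have hzero : ∫ z in s ∩ σ ⁻¹' s, f z ∂μ = 0 := by
    have h := hσ.setIntegral_preimage_emb σ.measurableEmbedding f (s ∩ σ ⁻¹' s)
    simp_rw [hsymm, hf, integral_neg] at h
    have h2 : (2 : ℝ) • ∫ z in s ∩ σ ⁻¹' s, f z ∂μ = 0 := by
      rw [two_smul]; nth_rw 1 [← h]; exact neg_add_cancel _
    exact (smul_eq_zero.1 h2).resolve_left two_ne_zero
  rw [← integral_inter_add_sdiff (σ.measurable hs) hfs, hzero, zero_add]

end Antisymmetric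

section Kernel

variable {E : Type*} [NormedAddCommGroup E] [NormedSpace ℝ E]

noncomputable def gravKernel (n : ℕ) (y : E) : E := (‖y‖ ^ n)⁻¹ • y

lemma norm_gravKernel_le (n : ℕ) (y : E) : ‖gravKernel n y‖ ≤ ‖y‖ ^ (1 - (n : ℝ)) := by
  rcases eq_or_ne y 0 with rfl | hy
  · simp [gravKernel, Real.rpow_nonneg]
  rw [gravKernel, norm_smul, norm_inv, norm_pow, norm_norm, Real.rpow_sub (norm_pos_iff.2 hy),
    Real.rpow_one, Real.rpow_natCast, inv_mul_eq_div]

lemma gravKernel_map (τ : E ≃ₗᵢ[ℝ] E) (n : ℕ) (y : E) :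
    gravKernel n (τ y) = τ (gravKernel n y) := by
  simp [gravKernel]

variable [FiniteDimensional ℝ E] [MeasurableSpace E] [BorelSpace E]

lemma locallyIntegrable_gravKernel {μ : Measure E} [μ.IsAddHaarMeasure] {n : ℕ}
    (hE : 0 < finrank ℝ E) (hn : n ≤ finrank ℝ E) : LocallyIntegrable (gravKernel n) μ :=
  locallyIntegrable_of_norm_le_rpow (α := n - 1) hE (by linarith [(Nat.cast_le (α := ℝ)).2 hn])
    (.of_forall fun y => (norm_gravKernel_le n y).trans_eq (by rw [one_mul, neg_sub]))
    ((continuous_norm.pow n).measurable.inv.smul measurable_id).aestronglyMeasurable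

lemma IsCompact.integrableOn_gravKernel_sub {μ : Measure E} [μ.IsAddHaarMeasure] {n : ℕ}
    (hE : 0 < finrank ℝ E) (hn : n ≤ finrank ℝ E) {K : Set E} (hK : IsCompact K) (x : E) :
    IntegrableOn (fun z => gravKernel n (z - x)) K μ := by
  have hmap : Measure.map (Homeomorph.subRight x) μ = μ := map_sub_right_eq_self μ x
  have := (locallyIntegrable_map_homeomorph (Homeomorph.subRight x) (μ := μ)).1
    (by rw [hmap]; exact locallyIntegrable_gravKernel hE hn)
  exact this.integrableOn_isCompact hK

end Kernel

lemma setIntegral_gravKernel_sub_map {E : Type*} [NormedAddCommGroup E] [InnerProductSpace ℝ E]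
    [FiniteDimensional ℝ E] [MeasurableSpace E] [BorelSpace E] (τ : E ≃ₗᵢ[ℝ] E) {s : Set E}
    (hs : τ ⁻¹' s = s) (n : ℕ) (x : E) :
    ∫ z in s, gravKernel n (z - τ x) = τ (∫ z in s, gravKernel n (z - x)) := by
  rw [← τ.measurePreserving.setIntegral_preimage_emb τ.toMeasurableEquiv.measurableEmbedding, hs]
  simp_rw [← map_sub, gravKernel_map]
  exact τ.toContinuousLinearEquiv.integral_comp_comm _

section Box

variable {ι : Type*}

def centeredBox (b : ι → ℝ) : Set (EuclideanSpace ℝ ι) := {z | ∀ j, |z j| ≤ b j}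

lemma centeredBox_eq_preimage (b : ι → ℝ) : centeredBox b = WithLp.ofLp ⁻¹' Icc (-b) b := by
  ext z; simp [centeredBox, abs_le, Pi.le_def, forall_and]

lemma isCompact_centeredBox (b : ι → ℝ) : IsCompact (centeredBox b) := by
  rw [centeredBox_eq_preimage]
  exact (PiLp.homeomorph 2 fun _ : ι => ℝ).isCompact_preimage.2 isCompact_Icc

variable [Fintype ι]

lemma measurableSet_centeredBox (b : ι → ℝ) : MeasurableSet (centeredBox b) :=
  (isCompact_centeredBox b).isClosed.measurableSet

lemma volume_preimage_ofLp_pi {J : ι → Set ℝ} (hJ : ∀ j, MeasurableSet (J j)) :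
    volume (WithLp.ofLp ⁻¹' univ.pi J : Set (EuclideanSpace ℝ ι)) = ∏ j, volume (J j) := by
  rw [(PiLp.volume_preserving_ofLp ι).measure_preimage (MeasurableSet.univ_pi hJ).nullMeasurableSet,
    volume_pi_pi]

lemma EuclideanSpace.norm_le_card_mul {w : EuclideanSpace ℝ ι} {M : ℝ} (h : ∀ j, |w j| ≤ M) :
    ‖w‖ ≤ Fintype.card ι * M := by
  calc ‖w‖ = ‖∑ j, w j • EuclideanSpace.basisFun ι ℝ j‖ := by
        simpa using congrArg norm ((EuclideanSpace.basisFun ι ℝ).sum_repr w).symm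
    _ ≤ ∑ j, |w j| := by
        refine (norm_sum_le _ _).trans_eq (Finset.sum_congr rfl fun j _ => ?_)
        simp [norm_smul]
    _ ≤ Fintype.card ι * M := by
        simpa using Finset.sum_le_sum fun j (_ : j ∈ Finset.univ) => h j

lemma EuclideanSpace.integral_apply {α : Type*} [MeasurableSpace α] {μ : Measure α}
    {F : α → EuclideanSpace ℝ ι} (hF : Integrable F μ) (j : ι) :
    (∫ a, F a ∂μ) j = ∫ a, F a j ∂μ :=
  ((EuclideanSpace.proj (𝕜 := ℝ) j).integral_comp_comm hF).symm

lemma gravKernel_apply (n : ℕ) (y : EuclideanSpace ℝ ι) (j : ι) :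
    gravKernel n y j = (‖y‖ ^ n)⁻¹ * y j := rfl

lemma div_pow_le_neg_gravKernel_apply {n : ℕ} {y : EuclideanSpace ℝ ι} {i : ι} {β M : ℝ}
    (hβ : 0 < β) (hy : β ≤ -y i) (hM : ‖y‖ ≤ M) : β / M ^ n ≤ -gravKernel n y i := by
  have hyβ : β ≤ ‖y‖ := hy.trans ((neg_le_abs _).trans (PiLp.norm_apply_le y i))
  rw [gravKernel_apply, ← mul_neg, inv_mul_eq_div]
  exact div_le_div₀ (hβ.le.trans hy) hy (pow_pos (hβ.trans_le hyβ) n)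
    (pow_le_pow_left₀ (hβ.le.trans hyβ) hM n)

variable [DecidableEq ι]

noncomputable def reflectCoord (i : ι) : EuclideanSpace ℝ ι ≃ₗᵢ[ℝ] EuclideanSpace ℝ ι :=
  LinearIsometryEquiv.piLpCongrRight 2
    fun j => if j = i then LinearIsometryEquiv.neg ℝ else LinearIsometryEquiv.refl ℝ ℝ

@[simp]
lemma reflectCoord_apply (i : ι) (z : EuclideanSpace ℝ ι) (j : ι) :
    reflectCoord i z j = if j = i then -z j else z j := by
  simp only [reflectCoord, LinearIsometryEquiv.piLpCongrRight_apply]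
  split_ifs <;> rfl

@[simp]
lemma reflectCoord_reflectCoord (i : ι) (z : EuclideanSpace ℝ ι) :
    reflectCoord i (reflectCoord i z) = z := by
  ext j; by_cases h : j = i <;> simp [h]

lemma reflectCoord_preimage_centeredBox (i : ι) (b : ι → ℝ) :
    reflectCoord i ⁻¹' centeredBox b = centeredBox b := by
  ext z
  refine forall_congr' fun j => ?_
  by_cases h : j = i <;> simp [h]

noncomputable def reflectCoordAt (x : EuclideanSpace ℝ ι) (i : ι) :
    EuclideanSpace ℝ ι ≃ᵐ EuclideanSpace ℝ ι :=
  (MeasurableEquiv.subRight x).trans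
    ((reflectCoord i).toMeasurableEquiv.trans (MeasurableEquiv.addLeft x))

lemma reflectCoordAt_apply (x : EuclideanSpace ℝ ι) (i : ι) (z : EuclideanSpace ℝ ι) :
    reflectCoordAt x i z = x + reflectCoord i (z - x) := rfl

lemma reflectCoordAt_apply_apply (x : EuclideanSpace ℝ ι) (i : ι) (z : EuclideanSpace ℝ ι)
    (j : ι) : reflectCoordAt x i z j = if j = i then 2 * x i - z i else z j := by
  rw [reflectCoordAt_apply]
  split_ifs with h
  · simp only [h, PiLp.add_apply, reflectCoord_apply, if_pos, map_sub, PiLp.sub_apply]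
    ring
  · simp [h]

lemma reflectCoordAt_sub (x : EuclideanSpace ℝ ι) (i : ι) (z : EuclideanSpace ℝ ι) :
    reflectCoordAt x i z - x = reflectCoord i (z - x) := by
  rw [reflectCoordAt_apply, add_sub_cancel_left]

lemma reflectCoordAt_involutive (x : EuclideanSpace ℝ ι) (i : ι) :
    Function.Involutive (reflectCoordAt x i) := by
  intro z
  rw [reflectCoordAt_apply, reflectCoordAt_sub, reflectCoord_reflectCoord, add_sub_cancel]

lemma measurePreserving_reflectCoordAt (x : EuclideanSpace ℝ ι) (i : ι) :
    MeasurePreserving (reflectCoordAt x i) :=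
  (measurePreserving_add_left volume x).comp
    ((reflectCoord i).measurePreserving.comp (measurePreserving_sub_right volume x))

def unpairedPart (b : ι → ℝ) (x : EuclideanSpace ℝ ι) (i : ι) : Set (EuclideanSpace ℝ ι) :=
  centeredBox b \ reflectCoordAt x i ⁻¹' centeredBox b

lemma unpairedPart_subset (b : ι → ℝ) (x : EuclideanSpace ℝ ι) (i : ι) :
    unpairedPart b x i ⊆ centeredBox b :=
  sdiff_subset

lemma mem_unpairedPart {b : ι → ℝ} {x z : EuclideanSpace ℝ ι} {i : ι} :
    z ∈ unpairedPart b x i ↔ z ∈ centeredBox b ∧ b i < |2 * x i - z i| := by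
  refine and_congr_right fun hz => ?_
  simp only [mem_preimage, centeredBox, Set.mem_ofPred_eq, reflectCoordAt_apply_apply,
    not_forall, not_le]
  refine ⟨fun ⟨j, hj⟩ => ?_, fun h => ⟨i, by simpa using h⟩⟩
  by_cases h : j = i
  · simpa [h] using hj
  · exact absurd (hz j) (by simpa [h] using hj)

lemma measurableSet_unpairedPart (b : ι → ℝ) (x : EuclideanSpace ℝ ι) (i : ι) :
    MeasurableSet (unpairedPart b x i) :=
  (measurableSet_centeredBox b).diff ((reflectCoordAt x i).measurable (measurableSet_centeredBox b))

lemma exists_box_subset_unpairedPart {b : ι → ℝ} {x : EuclideanSpace ℝ ι} (hx : x ∈ centeredBox b)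
    {i : ι} (hxi : 0 ≤ x i) (hbi : 0 < b i) (hb : ∀ j, b i ≤ b j) :
    ∃ R ⊆ unpairedPart b x i, MeasurableSet R ∧ volume.real R = x i * b i ^ (Fintype.card ι - 1) ∧
      ∀ z ∈ R, b i ≤ x i - z i ∧ ‖z - x‖ ≤ 2 * Fintype.card ι * b i := by
  have hxb : x i ≤ b i := (abs_le.1 (hx i)).2
  choose s hs using fun j => exists_Icc_subset_Icc_mem (hx j) hbi.le (hb j)
  set J : ι → Set ℝ := fun j => if j = i then Ioo (-b i) (x i - b i) else Icc (s j) (s j + b i)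
  have hJ : ∀ j, MeasurableSet (J j) := fun j => by
    by_cases h : j = i <;> simp [J, h, measurableSet_Ioo, measurableSet_Icc]
  set R : Set (EuclideanSpace ℝ ι) := WithLp.ofLp ⁻¹' univ.pi J
  have hRi : ∀ z ∈ R, z i ∈ Ioo (-b i) (x i - b i) := fun z hz => by
    simpa [J] using hz i (mem_univ i)
  have hRj : ∀ z ∈ R, ∀ j ≠ i, z j ∈ Icc (s j) (s j + b i) :=
    fun z hz j hj => by simpa [J, hj] using hz j (mem_univ j)
  refine ⟨R, fun z hz => ?_, .preimage (.univ_pi hJ) (by fun_prop), ?_,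
    fun z hz => ?_⟩
  · obtain ⟨hzi₁, hzi₂⟩ := hRi z hz
    refine mem_unpairedPart.2 ⟨fun j => ?_, lt_of_lt_of_le (by linarith) (le_abs_self _)⟩
    by_cases h : j = i
    · rw [h, abs_le]; constructor <;> linarith
    · exact abs_le.2 ((hs j).2 (hRj z hz j h))
  · rw [measureReal_def, volume_preimage_ofLp_pi hJ, ENNReal.toReal_prod,
      ← Fintype.prod_ite_eq_mul_pow i]
    refine Finset.prod_congr rfl fun j _ => ?_
    by_cases h : j = i
    · simp [J, h, hxi]
    · simp [J, h, hbi.le]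
  · obtain ⟨hzi₁, hzi₂⟩ := hRi z hz
    refine ⟨by linarith, (EuclideanSpace.norm_le_card_mul (M := 2 * b i) fun j => ?_).trans_eq
      (by ring)⟩
    rw [PiLp.sub_apply, abs_le]
    by_cases h : j = i
    · rw [h]; constructor <;> linarith
    · obtain ⟨hz₁, hz₂⟩ := hRj z hz j h
      obtain ⟨hx₁, hx₂⟩ := (hs j).1
      constructor <;> linarith

lemma neg_gravKernel_sub_apply_nonneg {n : ℕ} {b : ι → ℝ} {x z : EuclideanSpace ℝ ι} {i : ι}
    (hxi : 0 ≤ x i) (hz : z ∈ unpairedPart b x i) : 0 ≤ -gravKernel n (z - x) i := by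
  obtain ⟨hz, hσz⟩ := mem_unpairedPart.1 hz
  have hzx : z i ≤ x i := by
    rcases lt_abs.1 hσz with h | h <;> linarith [abs_le.1 (hz i)]
  rw [gravKernel_apply, ← mul_neg, PiLp.sub_apply, neg_sub]
  exact mul_nonneg (by positivity) (sub_nonneg.2 hzx)

end Box

section BoxForce

variable {ι : Type*} [Fintype ι] [Nonempty ι]

lemma integrableOn_centeredBox_gravKernel_sub_apply {n : ℕ} (hn : n ≤ Fintype.card ι)
    (b : ι → ℝ) (x : EuclideanSpace ℝ ι) (i : ι) :
    IntegrableOn (fun z => gravKernel n (z - x) i) (centeredBox b) :=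
  (EuclideanSpace.proj (𝕜 := ℝ) i).integrable_comp <|
    (isCompact_centeredBox b).integrableOn_gravKernel_sub (by simpa using Fintype.card_pos)
      (by simpa using hn) x

variable [DecidableEq ι]

lemma setIntegral_centeredBox_eq_setIntegral_unpairedPart {n : ℕ} (hn : n ≤ Fintype.card ι)
    (b : ι → ℝ) (x : EuclideanSpace ℝ ι) (i : ι) :
    ∫ z in centeredBox b, -gravKernel n (z - x) i =
      ∫ z in unpairedPart b x i, -gravKernel n (z - x) i := by
  refine setIntegral_eq_setIntegral_sdiff_preimage_of_comp_eq_neg _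
    (measurePreserving_reflectCoordAt x i) (reflectCoordAt_involutive x i) (fun z => ?_)
    (measurableSet_centeredBox b) (integrableOn_centeredBox_gravKernel_sub_apply hn b x i).neg
  rw [reflectCoordAt_sub, gravKernel_map, reflectCoord_apply, if_pos rfl, neg_neg]

lemma setIntegral_centeredBox_neg_gravKernel_apply_nonneg {n : ℕ} (hn : n ≤ Fintype.card ι)
    (b : ι → ℝ) {x : EuclideanSpace ℝ ι} {i : ι} (hxi : 0 ≤ x i) :
    0 ≤ ∫ z in centeredBox b, -gravKernel n (z - x) i := by
  rw [setIntegral_centeredBox_eq_setIntegral_unpairedPart hn]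
  exact setIntegral_nonneg (measurableSet_unpairedPart b x i)
    fun z => neg_gravKernel_sub_apply_nonneg hxi

lemma le_setIntegral_centeredBox_neg_gravKernel_apply {b : ι → ℝ} {x : EuclideanSpace ℝ ι}
    (hx : x ∈ centeredBox b) {i : ι} (hxi : 0 ≤ x i) (hbi : 0 < b i) (hb : ∀ j, b i ≤ b j) :
    x i / (2 * Fintype.card ι) ^ Fintype.card ι ≤
      ∫ z in centeredBox b, -gravKernel (Fintype.card ι) (z - x) i := by
  set m := Fintype.card ι
  obtain ⟨R, hRS, hRm, hvol, hR⟩ := exists_box_subset_unpairedPart hx hxi hbi hb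
  have hint := (integrableOn_centeredBox_gravKernel_sub_apply le_rfl b x i).neg
  have hS := unpairedPart_subset b x i
  calc x i / (2 * m) ^ m = b i / (2 * m * b i) ^ m * volume.real R := by
        rw [hvol, mul_pow (2 * (m : ℝ)) (b i), ← mul_pow_sub_one Fintype.card_ne_zero (b i)]
        field_simp
    _ ≤ ∫ z in R, -gravKernel m (z - x) i :=
        setIntegral_ge_of_const_le_real hRm
          ((measure_mono (hRS.trans hS)).trans_lt (isCompact_centeredBox b).measure_lt_top).ne
          (fun z hz => div_pow_le_neg_gravKernel_apply hbi (by simpa using (hR z hz).1)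
            (hR z hz).2)
          (hint.mono_set (hRS.trans hS))
    _ ≤ ∫ z in unpairedPart b x i, -gravKernel m (z - x) i := by
        refine setIntegral_mono_set (hint.mono_set hS) ?_ hRS.eventuallyLE
        exact (ae_restrict_iff' (measurableSet_unpairedPart b x i)).2
          (.of_forall fun z => neg_gravKernel_sub_apply_nonneg hxi)
    _ = ∫ z in centeredBox b, -gravKernel m (z - x) i :=
        (setIntegral_centeredBox_eq_setIntegral_unpairedPart le_rfl b x i).symm

end BoxForce

section GravBox

variable {d : ℕ} (h0 : 0 < d) (L W : ℝ)

lemma gravBox_eq_centeredBox :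
    gravBox d h0 L W = centeredBox (Function.update (fun _ => W) ⟨0, h0⟩ L) := by
  ext z
  exact (Function.forall_update_iff _ (p := fun j c => |z j| ≤ c)).symm

lemma reflectCoord_preimage_gravBox (i : Fin d) :
    reflectCoord i ⁻¹' gravBox d h0 L W = gravBox d h0 L W := by
  rw [gravBox_eq_centeredBox, reflectCoord_preimage_centeredBox]

lemma gravBoxForce_apply (x : EuclideanSpace ℝ (Fin d)) (i : Fin d) :
    gravBoxForce d h0 L W x i = ∫ z in gravBox d h0 L W, -gravKernel d (z - x) i := by
  have hint : IntegrableOn (fun z => gravKernel d (z - x)) (gravBox d h0 L W) := by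
    rw [gravBox_eq_centeredBox]
    exact (isCompact_centeredBox _).integrableOn_gravKernel_sub (by simpa using h0) (by simp) x
  rw [gravBoxForce, PiLp.neg_apply, integral_neg]
  exact congrArg Neg.neg (EuclideanSpace.integral_apply hint i)

lemma gravBoxForce_reflectCoord (x : EuclideanSpace ℝ (Fin d)) (i : Fin d) :
    gravBoxForce d h0 L W (reflectCoord i x) = reflectCoord i (gravBoxForce d h0 L W x) := by
  rw [gravBoxForce, gravBoxForce, map_neg]
  exact congrArg Neg.neg
    (setIntegral_gravKernel_sub_map _ (reflectCoord_preimage_gravBox h0 L W i) d x)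

end GravBox

/-- Let `d ≥ 2`. There exist constants `C, c > 0` depending only on `d` such
that for all `L, W > 0`, every `x ∈ V`, and every index `2 ≤ i ≤ d`: if `x_i ≥ 0` then
`G(x)_i ≥ c·x_i·(1 - (C·W/(W+L))^{d-1})`, and if `x_i ≤ 0` then
`G(x)_i ≤ c·x_i·(1 - (C·W/(W+L))^{d-1})`. -/
theorem gravBoxForce_radial_coord_bound (d : ℕ) (hd : 2 ≤ d) :
    ∃ C : ℝ, 0 < C ∧ ∃ c : ℝ, 0 < c ∧
      ∀ (L W : ℝ), 0 < L → 0 < W →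
      ∀ x ∈ gravBox d (by omega) L W,
      ∀ i : Fin d, i ≠ ⟨0, by omega⟩ →
        (0 ≤ x i →
          c * x i * (1 - (C * W / (W + L)) ^ (d - 1)) ≤ gravBoxForce d (by omega) L W x i) ∧
        (x i ≤ 0 →
          gravBoxForce d (by omega) L W x i ≤ c * x i * (1 - (C * W / (W + L)) ^ (d - 1))) := by
  have : Nonempty (Fin d) := ⟨⟨0, by omega⟩⟩
  refine ⟨2, two_pos, ((2 * d : ℝ) ^ d)⁻¹, by positivity, fun L W hL hW x hx i hi => ?_⟩
  have hWL : (2 * W / (W + L)) ^ (d - 1) ≤ 1 → W ≤ L := fun h => by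
    rw [pow_le_one_iff_of_nonneg (by positivity) (by omega), div_le_one (by positivity)] at h
    linarith
  have key : ∀ y ∈ gravBox d (by omega) L W, 0 ≤ y i → ((2 * d : ℝ) ^ d)⁻¹ * y i *
      (1 - (2 * W / (W + L)) ^ (d - 1)) ≤ gravBoxForce d (by omega) L W y i := by
    intro y hy hyi
    rw [gravBox_eq_centeredBox] at hy
    rw [gravBoxForce_apply, gravBox_eq_centeredBox]
    set b := Function.update (fun _ => W) (⟨0, by omega⟩ : Fin d) L
    have hbi : b i = W := Function.update_of_ne hi _ _
    refine mul_one_sub_le_of_le (setIntegral_centeredBox_neg_gravKernel_apply_nonneg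
      (Fintype.card_fin d).ge b hyi) (by positivity) (by positivity) fun hq => ?_
    have hb : ∀ j, b i ≤ b j := fun j => by
      rw [hbi]
      simp only [b, Function.update_apply]
      split_ifs <;> simp [hWL hq]
    simpa [div_eq_inv_mul] using
      le_setIntegral_centeredBox_neg_gravKernel_apply hy hyi (hbi ▸ hW) hb
  refine ⟨key x hx, fun hxi => ?_⟩
  rw [← reflectCoord_preimage_gravBox _ L W i] at hx
  have := key (reflectCoord i x) hx (by simpa using hxi)
  simp only [gravBoxForce_reflectCoord, reflectCoord_apply, if_pos] at this
  linarith
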